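/- In an ordered field Q, if a map f : Q⁴ → Q⁴ preserves the Minkowski relation 'lightlike separation' in both directions (μ(x̄,ȳ) = 0 ↔ μ(f(x̄),f(ȳ)) = 0 for all x̄, ȳ), is bijective, and is affine, then there is a nonzero constant c ∈ Q such that μ(f(x̄),f(ȳ)) = c·μ(x̄,ȳ) for all x̄, ȳ. -/

import Mathlib

/-!
Pulling the Minkowski form back along the linear part of `f` gives a quadratic form `P` that
vanishes on the light cone. Evaluating `P` on the lightlike vectors `eᵢ ± e₃` and
`3 eᵢ + 4 eⱼ + 5 e₃` (for distinct spatial `i, j`, from `3² + 4² = 5²`) pins down the polar form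
of `P` on the standard basis: it is `P e₀` times that of the Minkowski form. Hence `P` is a
multiple of the Minkowski form, and the multiple is nonzero because `f` maps the non-lightlike
pair `e₀, 0` to a non-lightlike pair.
-/

def mu {Q : Type} [Field Q] [LinearOrder Q] [IsStrictOrderedRing Q] (x y : Fin 4 → Q) : Q :=
  (x 0 - y 0)^2 + (x 1 - y 1)^2 + (x 2 - y 2)^2 - (x 3 - y 3)^2

open QuadraticMap

def minkowskiForm (K : Type*) [CommRing K] : QuadraticForm K (Fin 4 → K) :=
  weightedSumSquares K ![1, 1, 1, -1]

section MinkowskiForm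

variable {K : Type*}

@[simp]
theorem minkowskiForm_apply [CommRing K] (v : Fin 4 → K) :
    minkowskiForm K v = v 0 ^ 2 + v 1 ^ 2 + v 2 ^ 2 - v 3 ^ 2 := by
  simp [minkowskiForm, Fin.sum_univ_four]
  ring

theorem polar_minkowskiForm_single [CommRing K] (i j : Fin 4) :
    polar (minkowskiForm K) (Pi.single i 1) (Pi.single j 1) =
      if i = j then (if i = 3 then -2 else 2) else 0 := by
  fin_cases i <;> fin_cases j <;> simp [polar] <;> norm_num

variable [Field K] [CharZero K]

namespace LinearMap.BilinForm

variable {B : LinearMap.BilinForm K (Fin 4 → K)}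

theorem apply_single_time_of_isotropic (hB : B.IsSymm)
    (hnull : ∀ v, minkowskiForm K v = 0 → B v v = 0) {i : Fin 4} (hi : i ≠ 3) :
    B (Pi.single i 1) (Pi.single 3 1) = 0 ∧
      B (Pi.single i 1) (Pi.single i 1) = -B (Pi.single 3 1) (Pi.single 3 1) := by
  have hplus := hnull (Pi.single i 1 + Pi.single 3 1) (by fin_cases i <;> simp_all)
  have hminus := hnull (Pi.single i 1 - Pi.single 3 1) (by fin_cases i <;> simp_all)
  simp only [map_add, map_sub, LinearMap.add_apply, LinearMap.sub_apply, hB.eq (Pi.single 3 1)]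
    at hplus hminus
  exact ⟨by linear_combination (hplus - hminus) / 4, by linear_combination (hplus + hminus) / 2⟩

theorem apply_single_single_of_isotropic (hB : B.IsSymm)
    (hnull : ∀ v, minkowskiForm K v = 0 → B v v = 0) {i j : Fin 4} (hi : i ≠ 3) (hj : j ≠ 3)
    (hij : i ≠ j) : B (Pi.single i 1) (Pi.single j 1) = 0 := by
  have h := hnull ((3 : K) • Pi.single i 1 + (4 : K) • Pi.single j 1 + (5 : K) • Pi.single 3 1)
    (by fin_cases i <;> fin_cases j <;> simp_all <;> norm_num)
  simp only [map_add, map_smul, LinearMap.add_apply, LinearMap.smul_apply, smul_eq_mul,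
    hB.eq (Pi.single j 1) (Pi.single i 1), hB.eq (Pi.single 3 1)] at h
  obtain ⟨hi3, hii⟩ := apply_single_time_of_isotropic hB hnull hi
  obtain ⟨hj3, hjj⟩ := apply_single_time_of_isotropic hB hnull hj
  linear_combination (h - 9 * hii - 16 * hjj - 30 * hi3 - 40 * hj3) / 24

end LinearMap.BilinForm

theorem QuadraticMap.eq_smul_minkowskiForm_of_isotropic (P : QuadraticForm K (Fin 4 → K))
    (hP : ∀ v, minkowskiForm K v = 0 → P v = 0) :
    P = P (Pi.single 0 1) • minkowskiForm K := by
  set B := polarBilin P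
  have hB : LinearMap.BilinForm.IsSymm B := ⟨polar_comm P⟩
  have hnull (v) (hv : minkowskiForm K v = 0) : B v v = 0 := by
    rw [polarBilin_apply_apply, polar_self, hP v hv, smul_zero]
  have h00 : B (Pi.single 0 1) (Pi.single 0 1) = 2 * P (Pi.single 0 1) := by
    rw [polarBilin_apply_apply, polar_self, two_smul, two_mul]
  apply polarBilin_injective (two_ne_zero (α := K)).isUnit
  refine LinearMap.ext_basis (Pi.basisFun K _) (Pi.basisFun K _) fun i j => ?_
  rw [Pi.basisFun_apply, Pi.basisFun_apply]
  change B (Pi.single i 1) (Pi.single j 1) = _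
  conv_rhs => rw [polarBilin_apply_apply, FunLike.coe_smul, polar_smul,
    polar_minkowskiForm_single, smul_eq_mul]
  have htime {k : Fin 4} (hk : k ≠ 3) :=
    LinearMap.BilinForm.apply_single_time_of_isotropic hB hnull hk
  rcases eq_or_ne i j with rfl | hij
  · obtain ⟨-, h0⟩ := htime (k := 0) (by decide)
    rw [if_pos rfl]
    rcases eq_or_ne i 3 with rfl | hi
    · rw [if_pos rfl]
      linear_combination h0 - h00
    · rw [if_neg hi]
      linear_combination (htime hi).2 - h0 + h00
  · rw [if_neg hij, mul_zero]
    rcases eq_or_ne i 3 with rfl | hi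
    · rw [hB.eq]; exact (htime hij.symm).1
    rcases eq_or_ne j 3 with rfl | hj
    · exact (htime hi).1
    · exact LinearMap.BilinForm.apply_single_single_of_isotropic hB hnull hi hj hij

end MinkowskiForm

section Mu

variable {Q : Type} [Field Q] [LinearOrder Q] [IsStrictOrderedRing Q]

theorem mu_eq_minkowskiForm_sub (x y : Fin 4 → Q) : mu x y = minkowskiForm Q (x - y) := by
  simp [mu]

theorem mu_linearMap_add_const (L : (Fin 4 → Q) →ₗ[Q] Fin 4 → Q) (b x y : Fin 4 → Q) :
    mu (L x + b) (L y + b) = (minkowskiForm Q).comp L (x - y) := by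
  rw [mu_eq_minkowskiForm_sub, add_sub_add_right_eq_sub, comp_apply, map_sub L]

end Mu

theorem lightlike_preserving_affine_scales_mu_general {Q : Type} [Field Q] [LinearOrder Q] [IsStrictOrderedRing Q]
    (f : (Fin 4 → Q) → (Fin 4 → Q))
    (haff : ∃ (L : (Fin 4 → Q) → (Fin 4 → Q)) (b : Fin 4 → Q),
      IsLinearMap Q L ∧ ∀ x, f x = fun i => L x i + b i)
    (hlight : ∀ x y, mu x y = 0 ↔ mu (f x) (f y) = 0) :
    ∃ c : Q, c ≠ 0 ∧ ∀ x y, mu (f x) (f y) = c * mu x y := by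
  obtain ⟨L, b, hL, hf⟩ := haff
  set L' := IsLinearMap.mk' L hL
  obtain rfl : f = fun x => L' x + b := funext hf
  obtain ⟨c, hc⟩ : ∃ c : Q, (minkowskiForm Q).comp L' = c • minkowskiForm Q := by
    refine ⟨_, QuadraticMap.eq_smul_minkowskiForm_of_isotropic _ fun v hv => ?_⟩
    have := (hlight v 0).1 (by rwa [mu_eq_minkowskiForm_sub, sub_zero])
    rwa [mu_linearMap_add_const, sub_zero] at this
  refine ⟨c, fun hc0 => ?_, fun x y => ?_⟩
  · have := (hlight (Pi.single 0 1) 0).2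
      (by rw [mu_linearMap_add_const, hc, hc0, zero_smul, zero_apply])
    simp [mu] at this
  · rw [mu_linearMap_add_const, hc, mu_eq_minkowskiForm_sub, smul_apply, smul_eq_mul]

theorem lightlike_preserving_affine_scales_mu {Q : Type} [Field Q] [LinearOrder Q] [IsStrictOrderedRing Q]
    (heucl : ∀ q : Q, 0 ≤ q → ∃ r : Q, r ^ 2 = q)
    (f : (Fin 4 → Q) → (Fin 4 → Q))
    (hbij : Function.Bijective f)
    (haff : ∃ (L : (Fin 4 → Q) → (Fin 4 → Q)) (b : Fin 4 → Q),
      IsLinearMap Q L ∧ ∀ x, f x = fun i => L x i + b i)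
    (hlight : ∀ x y, mu x y = 0 ↔ mu (f x) (f y) = 0) :
    ∃ c : Q, c ≠ 0 ∧ ∀ x y, mu (f x) (f y) = c * mu x y :=
  lightlike_preserving_affine_scales_mu_general f haff hlight
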